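/- arXiv:2305.06659 — 3 statements merged into one kernel-verified Lean document; each statement's English description precedes it below -/
import Mathlib

section
/- (Disjoint alignments bound self-edit distance) Let X, Y be strings and let A, A' : X → Y be two alignments which, viewed as paths in the alignment graph AG(X,Y), share no common diagonal edge. Then selfed(X) ≤ ed_A(X,Y) + ed_{A'}(X,Y), where ed_A denotes the number of edits made by alignment A. -/
abbrev Pt : Type := ℕ × ℕ

/-- A single step in an alignment path: right (deletion of an `X`-character),
down (insertion of a `Y`-character), or diagonal (aligning a pair of characters). -/
def AlignStep (p q : Pt) : Prop :=
  q = (p.1 + 1, p.2) ∨ q = (p.1, p.2 + 1) ∨ q = (p.1 + 1, p.2 + 1)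

/-- `A` is a monotone lattice path from `s` to `t` in the alignment graph. -/
def IsPath (s t : Pt) (A : List Pt) : Prop :=
  A.head? = some s ∧ A.getLast? = some t ∧ A.Chain' AlignStep

/-- The edges (consecutive pairs) of a path. -/
def edges (A : List Pt) : List (Pt × Pt) := A.zip A.tail

/-- Unweighted edit cost contributed by one edge: a diagonal edge costs 0 if the
two characters match and 1 otherwise (substitution); horizontal/vertical edges
(deletions/insertions) cost 1. -/
def edStep {α : Type*} [DecidableEq α] (X Y : List α) (e : Pt × Pt) : ℕ :=
  if e.2 = (e.1.1 + 1, e.1.2 + 1) then (if X[e.1.1]? = Y[e.1.2]? then 0 else 1) else 1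

/-- The number of edits made by the alignment (path) `A` of `X` onto `Y`. -/
def edCost {α : Type*} [DecidableEq α] (X Y : List α) (A : List Pt) : ℕ :=
  ((edges A).map (edStep X Y)).sum

/-- Weighted cost contributed by one edge, under weight function `w` (with `none` playing
the role of `ε`): diagonal edges cost `w X[x] Y[y]`, horizontal `w X[x] ε`, vertical `w ε Y[y]`. -/
noncomputable def wStep {α : Type*} (w : Option α → Option α → ℝ) (X Y : List α)
    (e : Pt × Pt) : ℝ :=
  if e.2 = (e.1.1 + 1, e.1.2 + 1) then w (X[e.1.1]?) (Y[e.1.2]?)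
  else if e.2 = (e.1.1 + 1, e.1.2) then w (X[e.1.1]?) none
  else w none (Y[e.1.2]?)

/-- The weighted cost of the alignment (path) `A` of `X` onto `Y` under `w`. -/
noncomputable def wCost {α : Type*} (w : Option α → Option α → ℝ) (X Y : List α)
    (A : List Pt) : ℝ :=
  ((edges A).map (wStep w X Y)).sum

/-- Unweighted (Levenshtein) edit distance. -/
noncomputable def ed {α : Type*} [DecidableEq α] (X Y : List α) : ℕ :=
  sInf { c | ∃ A, IsPath (0, 0) (X.length, Y.length) A ∧ edCost X Y A = c }

/-- Weighted edit distance under `w`. -/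
noncomputable def wed {α : Type*} (w : Option α → Option α → ℝ) (X Y : List α) : ℝ :=
  sInf { c | ∃ A, IsPath (0, 0) (X.length, Y.length) A ∧ wCost w X Y A = c }

/-- A path contains no diagonal edge on the main diagonal,
i.e. it never aligns a character to itself. -/
def NoSelfDiag (A : List Pt) : Prop :=
  ∀ e ∈ edges A, ¬ (e.1.1 = e.1.2 ∧ e.2 = (e.1.1 + 1, e.1.2 + 1))

/-- The self-edit distance of `X`: the minimum number of edits over all
self-alignments of `X` (alignments of `X` onto itself never aligning a character
to itself). -/
noncomputable def selfed {α : Type*} [DecidableEq α] (X : List α) : ℕ :=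
  sInf { c | ∃ A, IsPath (0, 0) (X.length, X.length) A ∧ NoSelfDiag A ∧ edCost X X A = c }

/-- The fragment `X[a..b)`. -/
def frag {α : Type*} (X : List α) (a b : ℕ) : List α := (X.drop a).take (b - a)

/-!
A self-alignment of `X` is obtained by composing `A` with the reverse of `A'`: walk along both
alignments in step with their common position in `Y`. Composition costs at most the sum of the
two costs (on a diagonal step this is the triangle inequality for the mismatch indicator), and
reversal preserves cost. A diagonal edge `(x, x) → (x + 1, x + 1)` of the composite would come
from a diagonal edge `(x, y) → (x + 1, y + 1)` lying on both `A` and `A'`.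
-/

inductive Move
  | right
  | down
  | diag

namespace Move

def next : Move → Pt → Pt
  | right, p => (p.1 + 1, p.2)
  | down, p => (p.1, p.2 + 1)
  | diag, p => (p.1 + 1, p.2 + 1)

lemma alignStep_next (m : Move) (p : Pt) : AlignStep p (m.next p) := by
  cases m <;> simp [AlignStep, next]

lemma le_next (m : Move) (p : Pt) : p ≤ m.next p := by
  cases m <;> simp [next, Prod.le_def]

end Move

open Move

def walk (p : Pt) : List Move → List Pt
  | [] => [p]
  | m :: ms => p :: walk (m.next p) ms

def walkEnd (p : Pt) : List Move → Pt
  | [] => p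
  | m :: ms => walkEnd (m.next p) ms

lemma le_walkEnd (p : Pt) (ms : List Move) : p ≤ walkEnd p ms := by
  induction ms generalizing p with
  | nil => exact le_rfl
  | cons m ms ih => exact (m.le_next p).trans (ih _)

lemma walk_eq_cons (p : Pt) (ms : List Move) : ∃ l, walk p ms = p :: l := by
  cases ms <;> exact ⟨_, rfl⟩

lemma edges_walk_nil (p : Pt) : edges (walk p []) = [] := rfl

lemma edges_walk_cons (p : Pt) (m : Move) (ms : List Move) :
    edges (walk p (m :: ms)) = (p, m.next p) :: edges (walk (m.next p) ms) := by
  obtain ⟨l, hl⟩ := walk_eq_cons (m.next p) ms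
  simp only [walk, edges, hl, List.tail_cons, List.zip_cons_cons]

lemma getLast?_walk (p : Pt) (ms : List Move) : (walk p ms).getLast? = some (walkEnd p ms) := by
  induction ms generalizing p with
  | nil => rfl
  | cons m ms ih =>
    obtain ⟨l, hl⟩ := walk_eq_cons (m.next p) ms
    rw [walk, hl, List.getLast?_cons_cons, ← hl, ih, walkEnd]

lemma isChain_walk (p : Pt) (ms : List Move) : (walk p ms).IsChain AlignStep := by
  induction ms generalizing p with
  | nil => exact List.isChain_singleton p
  | cons m ms ih =>
    obtain ⟨l, hl⟩ := walk_eq_cons (m.next p) ms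
    rw [walk, hl, List.isChain_cons_cons, ← hl]
    exact ⟨alignStep_next m p, ih _⟩

lemma isPath_walk (p : Pt) (ms : List Move) : IsPath p (walkEnd p ms) (walk p ms) :=
  ⟨by obtain ⟨l, hl⟩ := walk_eq_cons p ms; rw [hl]; rfl, getLast?_walk p ms, isChain_walk p ms⟩

lemma exists_eq_next_of_alignStep {p q : Pt} (h : AlignStep p q) : ∃ m : Move, m.next p = q := by
  rcases h with h | h | h
  exacts [⟨right, h.symm⟩, ⟨down, h.symm⟩, ⟨diag, h.symm⟩]

lemma exists_walk_eq_of_isChain {p : Pt} {A : List Pt} (hc : A.IsChain AlignStep)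
    (hh : A.head? = some p) : ∃ ms, walk p ms = A := by
  induction A generalizing p with
  | nil => simp at hh
  | cons a l ih =>
    obtain rfl : a = p := by simpa using hh
    cases l with
    | nil => exact ⟨[], rfl⟩
    | cons b l =>
      rw [List.isChain_cons_cons] at hc
      obtain ⟨m, rfl⟩ := exists_eq_next_of_alignStep hc.1
      obtain ⟨ms, hms⟩ := ih hc.2 rfl
      exact ⟨m :: ms, by rw [walk, hms]⟩

lemma exists_walk_of_isPath {p q : Pt} {A : List Pt} (hA : IsPath p q A) :
    ∃ ms, walk p ms = A ∧ walkEnd p ms = q := by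
  obtain ⟨hh, hl, hc⟩ := hA
  obtain ⟨ms, rfl⟩ := exists_walk_eq_of_isChain hc hh
  exact ⟨ms, rfl, Option.some_injective _ (by rw [← getLast?_walk, hl])⟩

section Cost

variable {α : Type*} [DecidableEq α] (X Y : List α) (p : Pt)

lemma edCost_walk_cons (m : Move) (ms : List Move) :
    edCost X Y (walk p (m :: ms)) = edStep X Y (p, m.next p) + edCost X Y (walk (m.next p) ms) := by
  rw [edCost, edges_walk_cons, List.map_cons, List.sum_cons, edCost]

lemma edCost_walk_nil : edCost X Y (walk p []) = 0 := rfl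

variable (x y : ℕ)

lemma edStep_right : edStep X Y ((x, y), (x + 1, y)) = 1 := by
  simp [edStep]

lemma edStep_down : edStep X Y ((x, y), (x, y + 1)) = 1 := by
  simp [edStep]

lemma edStep_diag : edStep X Y ((x, y), (x + 1, y + 1)) = if X[x]? = Y[y]? then 0 else 1 := by
  simp [edStep]

lemma edStep_swap (e : Pt × Pt) : edStep Y X (Prod.map Prod.swap Prod.swap e) = edStep X Y e := by
  simp only [edStep, Prod.map_fst, Prod.map_snd, Prod.fst_swap, Prod.snd_swap, Prod.ext_iff]
  grind

lemma edCost_map_swap (A : List Pt) : edCost Y X (A.map Prod.swap) = edCost X Y A := by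
  simp [edCost, edges, ← List.map_tail, List.zip_map, Function.comp_def, edStep_swap]

end Cost

lemma AlignStep.swap {p q : Pt} (h : AlignStep p q) : AlignStep p.swap q.swap := by
  rcases h with rfl | rfl | rfl <;> simp [AlignStep]

lemma IsPath.map_swap {p q : Pt} {A : List Pt} (hA : IsPath p q A) :
    IsPath p.swap q.swap (A.map Prod.swap) := by
  obtain ⟨hh, hl, hc⟩ := hA
  exact ⟨by simp [hh], by simp [hl], (List.isChain_map _).2 (hc.imp fun _ _ => AlignStep.swap)⟩

lemma mem_edges_map_swap {A : List Pt} {e : Pt × Pt} :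
    (e.1.swap, e.2.swap) ∈ edges (A.map Prod.swap) ↔ e ∈ edges A := by
  simp [edges, ← List.map_tail, List.zip_map]

/-- `s` aligns `X` to `Y` and `t` aligns `Y` to `Z`; both are advanced in step along `Y`.
The last four equations are reached only when the two disagree on the length of `Y`. -/
def compose : List Move → List Move → List Move
  | right :: s, t => right :: compose s t
  | [], down :: t => down :: compose [] t
  | down :: s, down :: t => down :: compose (down :: s) t
  | diag :: s, down :: t => down :: compose (diag :: s) t
  | down :: s, right :: t => compose s t
  | down :: s, diag :: t => down :: compose s t
  | diag :: s, right :: t => right :: compose s t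
  | diag :: s, diag :: t => diag :: compose s t
  | [], [] => []
  | [], right :: _ => []
  | [], diag :: _ => []
  | down :: _, [] => []
  | diag :: _, [] => []

lemma walkEnd_compose (s t : List Move) (x y z : ℕ)
    (h : (walkEnd (x, y) s).2 = (walkEnd (y, z) t).1) :
    walkEnd (x, z) (compose s t) = ((walkEnd (x, y) s).1, (walkEnd (y, z) t).2) := by
  fun_induction compose s t generalizing x y z
  case case1 ih | case2 ih | case3 ih | case4 ih | case5 ih | case6 ih | case7 ih | case8 ih =>
    exact ih _ _ _ h
  case case9 => rfl
  case case10 t => exact absurd h (Nat.lt_of_succ_le (le_walkEnd (y + 1, z) t).1).ne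
  case case11 t => exact absurd h (Nat.lt_of_succ_le (le_walkEnd (y + 1, z + 1) t).1).ne
  case case12 s => exact absurd h (Nat.lt_of_succ_le (le_walkEnd (x, y + 1) s).2).ne'
  case case13 s => exact absurd h (Nat.lt_of_succ_le (le_walkEnd (x + 1, y + 1) s).2).ne'

lemma ite_ne_le_add {β : Type*} [DecidableEq β] (a b c : β) :
    (if a = c then 0 else 1) ≤ (if a = b then 0 else 1) + (if b = c then 0 else 1) := by
  split_ifs <;> simp_all

lemma edCost_walk_compose_le {α : Type*} [DecidableEq α] (X Y Z : List α) (s t : List Move)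
    (x y z : ℕ) :
    edCost X Z (walk (x, z) (compose s t)) ≤
      edCost X Y (walk (x, y) s) + edCost Y Z (walk (y, z) t) := by
  fun_induction compose s t generalizing x y z <;>
    simp only [edCost_walk_cons, edCost_walk_nil, edStep_right, edStep_down, edStep_diag, next,
      zero_le] at *
  case case1 ih => have := ih (x + 1) y z; omega
  case case2 ih => have := ih x y (z + 1); omega
  case case3 ih => have := ih x y (z + 1); omega
  case case4 ih => have := ih x y (z + 1); split_ifs at * <;> omega
  case case5 ih => have := ih x (y + 1) z; omega
  case case6 ih => have := ih x (y + 1) (z + 1); split_ifs at * <;> omega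
  case case7 ih => have := ih (x + 1) (y + 1) z; split_ifs at * <;> omega
  case case8 ih =>
    have := ih (x + 1) (y + 1) (z + 1)
    have := ite_ne_le_add X[x]? Y[y]? Z[z]?
    omega

lemma diag_mem_edges_walk_cons {a c : ℕ} {p : Pt} {m : Move} {ms : List Move} :
    ((a, c), (a + 1, c + 1)) ∈ edges (walk p (m :: ms)) ↔
      (m = diag ∧ (a, c) = p) ∨ ((a, c), (a + 1, c + 1)) ∈ edges (walk (m.next p) ms) := by
  rw [edges_walk_cons, List.mem_cons]
  cases m <;> simp [next, Prod.ext_iff, eq_comm] <;> omega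

lemma exists_diag_of_diag_mem_edges_walk_compose (s t : List Move) (x y z : ℕ) {a c : ℕ}
    (h : ((a, c), (a + 1, c + 1)) ∈ edges (walk (x, z) (compose s t))) :
    ∃ b, ((a, b), (a + 1, b + 1)) ∈ edges (walk (x, y) s) ∧
      ((b, c), (b + 1, c + 1)) ∈ edges (walk (y, z) t) := by
  fun_induction compose s t generalizing x y z <;>
    simp only [diag_mem_edges_walk_cons, edges_walk_nil, List.not_mem_nil, reduceCtorEq,
      false_and, false_or, true_and] at *
  case case1 ih | case3 ih | case4 ih | case5 ih => exact ih _ _ _ h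
  case case2 ih => exact ih x y _ h
  case case6 ih =>
    obtain ⟨b, hs, ht⟩ := ih x (y + 1) (z + 1) h
    exact ⟨b, hs, Or.inr ht⟩
  case case7 ih =>
    obtain ⟨b, hs, ht⟩ := ih (x + 1) (y + 1) z h
    exact ⟨b, Or.inr hs, ht⟩
  case case8 ih =>
    rcases h with h | h
    · obtain ⟨rfl, rfl⟩ := Prod.mk.inj h
      exact ⟨y, Or.inl rfl, Or.inl rfl⟩
    · obtain ⟨b, hs, ht⟩ := ih (x + 1) (y + 1) (z + 1) h
      exact ⟨b, Or.inr hs, Or.inr ht⟩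

theorem exists_isPath_comp {α : Type*} [DecidableEq α] {X Y Z : List α} {A B : List Pt}
    {x y z x' y' z' : ℕ} (hA : IsPath (x, y) (x', y') A) (hB : IsPath (y, z) (y', z') B) :
    ∃ C, IsPath (x, z) (x', z') C ∧ edCost X Z C ≤ edCost X Y A + edCost Y Z B ∧
      ∀ a c, ((a, c), (a + 1, c + 1)) ∈ edges C →
        ∃ b, ((a, b), (a + 1, b + 1)) ∈ edges A ∧ ((b, c), (b + 1, c + 1)) ∈ edges B := by
  obtain ⟨s, rfl, hs⟩ := exists_walk_of_isPath hA
  obtain ⟨t, rfl, ht⟩ := exists_walk_of_isPath hB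
  have hend : walkEnd (x, z) (compose s t) = (x', z') := by
    rw [walkEnd_compose s t x y z (by rw [hs, ht]), hs, ht]
  exact ⟨_, hend ▸ isPath_walk (x, z) (compose s t), edCost_walk_compose_le X Y Z s t x y z,
    fun _ _ => exists_diag_of_diag_mem_edges_walk_compose s t x y z⟩

/-- If two alignments of `X` onto `Y` share no common diagonal edge,
then `selfed X` is at most the sum of their edit counts. -/
theorem selfed_le_of_disjoint_alignments {α : Type*} [DecidableEq α] (X Y : List α)
    (A A' : List Pt)
    (hA : IsPath (0, 0) (X.length, Y.length) A)
    (hA' : IsPath (0, 0) (X.length, Y.length) A')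
    (hdisj : ∀ e : Pt × Pt, e.2 = (e.1.1 + 1, e.1.2 + 1) →
      e ∈ edges A → e ∉ edges A') :
    selfed X ≤ edCost X Y A + edCost X Y A' := by
  obtain ⟨C, hC, hcost, hdiag⟩ := exists_isPath_comp (X := X) (Y := Y) (Z := X) hA hA'.map_swap
  have hself : NoSelfDiag C := by
    rintro ⟨⟨a, a'⟩, q⟩ he ⟨ha : a = a', hq : q = (a + 1, a' + 1)⟩
    subst ha hq
    obtain ⟨b, hb, hb'⟩ := hdiag a a he
    exact hdisj _ rfl hb (mem_edges_map_swap.1 hb')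
  calc selfed X ≤ edCost X X C := Nat.sInf_le ⟨C, hC, hself, rfl⟩
    _ ≤ edCost X Y A + edCost Y X (A'.map Prod.swap) := hcost
    _ = edCost X Y A + edCost X Y A' := by rw [edCost_map_swap]
end

section
/- (Fragment alignment under triangle inequality) If a weight function w satisfies the triangle inequality, then for every string X and indices 0 ≤ i ≤ j ≤ |X|, wed(X, X[i..j)) = wed(X[0..i) · X[j..|X|), ε); i.e., the cheapest way to transform X into its own fragment X[i..j) is to delete the prefix X[0..i) and the suffix X[j..|X|). -/
section Telescoping

variable {α : Type*} (w : Option α → Option α → ℝ) (X Y : List α) (φ : Pt → ℝ)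

theorem wCost_cons_cons (p q : Pt) (l : List Pt) :
    wCost w X Y (p :: q :: l) = wStep w X Y (p, q) + wCost w X Y (q :: l) := by
  simp [wCost, edges, List.zip]

theorem sub_le_wCost_of_isChain :
    ∀ {A : List Pt} {s t : Pt}, A.head? = some s → A.getLast? = some t →
      A.IsChain (fun p q => φ p - φ q ≤ wStep w X Y (p, q)) → φ s - φ t ≤ wCost w X Y A
  | [_], _, _, hs, ht, _ => by
    simp only [List.head?_cons, List.getLast?_singleton, Option.some.injEq] at hs ht
    simp [← hs, ← ht, wCost, edges]
  | p :: q :: l, s, t, hs, ht, hA => by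
    obtain rfl : p = s := Option.some.inj hs
    rw [List.isChain_cons_cons] at hA
    rw [List.getLast?_cons_cons] at ht
    have := sub_le_wCost_of_isChain rfl ht hA.2
    rw [wCost_cons_cons]
    linarith [hA.1]

theorem wCost_eq_sub_of_isChain :
    ∀ {A : List Pt} {s t : Pt}, A.head? = some s → A.getLast? = some t →
      A.IsChain (fun p q => wStep w X Y (p, q) = φ p - φ q) → wCost w X Y A = φ s - φ t
  | [_], _, _, hs, ht, _ => by
    simp only [List.head?_cons, List.getLast?_singleton, Option.some.injEq] at hs ht
    simp [← hs, ← ht, wCost, edges]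
  | p :: q :: l, s, t, hs, ht, hA => by
    obtain rfl : p = s := Option.some.inj hs
    rw [List.isChain_cons_cons] at hA
    rw [List.getLast?_cons_cons] at ht
    rw [wCost_cons_cons, hA.1, wCost_eq_sub_of_isChain rfl ht hA.2]
    ring

end Telescoping

section DeletionPotential

variable {α : Type*} (w : Option α → Option α → ℝ)

def delCost (L : List α) : ℝ := (L.map fun a => w (some a) none).sum

@[simp] theorem delCost_nil : delCost w ([] : List α) = 0 := rfl

@[simp] theorem delCost_append (L M : List α) :
    delCost w (L ++ M) = delCost w L + delCost w M := by
  simp [delCost]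

theorem delCost_drop_sub_drop_succ (hw : w none none = 0) (L : List α) (x : ℕ) :
    delCost w (L.drop x) - delCost w (L.drop (x + 1)) = w L[x]? none := by
  rcases lt_or_ge x L.length with hx | hx
  · rw [List.drop_eq_getElem_cons hx, List.getElem?_eq_getElem hx]
    simp only [delCost, List.map_cons, List.sum_cons]
    ring
  · simp [List.drop_eq_nil_of_le hx, List.drop_eq_nil_of_le (hx.trans x.le_succ),
      List.getElem?_eq_none hx, hw]

def delPotential (X Y : List α) (p : Pt) : ℝ :=
  delCost w (X.drop p.1) - delCost w (Y.drop p.2)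

variable {w} (X Y : List α)

theorem wStep_right (p : Pt) : wStep w X Y (p, (p.1 + 1, p.2)) = w X[p.1]? none := by
  simp [wStep]

theorem wStep_down (p : Pt) : wStep w X Y (p, (p.1, p.2 + 1)) = w none Y[p.2]? := by
  simp [wStep, Prod.ext_iff]

theorem wStep_diag (p : Pt) :
    wStep w X Y (p, (p.1 + 1, p.2 + 1)) = w X[p.1]? Y[p.2]? := by
  simp [wStep]

theorem delPotential_sub_le_wStep (hw : w none none = 0)
    (htri : ∀ a b c, w a b ≤ w a c + w c b) {p q : Pt} (h : AlignStep p q) :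
    delPotential w X Y p - delPotential w X Y q ≤ wStep w X Y (p, q) := by
  have dX := delCost_drop_sub_drop_succ w hw X p.1
  have dY := delCost_drop_sub_drop_succ w hw Y p.2
  rcases h with rfl | rfl | rfl
  · rw [wStep_right]
    simp only [delPotential]
    linarith
  · rw [wStep_down]
    simp only [delPotential]
    linarith [htri none none Y[p.2]?]
  · rw [wStep_diag]
    simp only [delPotential]
    linarith [htri X[p.1]? none Y[p.2]?]

theorem wStep_right_eq_delPotential_sub (hw : w none none = 0) (p : Pt) :
    wStep w X Y (p, (p.1 + 1, p.2)) =
      delPotential w X Y p - delPotential w X Y (p.1 + 1, p.2) := by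
  rw [wStep_right, ← delCost_drop_sub_drop_succ w hw]
  simp only [delPotential]
  ring

theorem wStep_diag_eq_delPotential_sub (hw0 : ∀ a, w a a = 0) (p : Pt)
    (hp : X[p.1]? = Y[p.2]?) :
    wStep w X Y (p, (p.1 + 1, p.2 + 1)) =
      delPotential w X Y p - delPotential w X Y (p.1 + 1, p.2 + 1) := by
  have dX := delCost_drop_sub_drop_succ w (hw0 none) X p.1
  have dY := delCost_drop_sub_drop_succ w (hw0 none) Y p.2
  rw [hp] at dX
  rw [wStep_diag, hp, hw0]
  simp only [delPotential]
  linarith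

end DeletionPotential

section WeightedEditDistance

variable {α : Type*} {w : Option α → Option α → ℝ}

theorem delCost_sub_le_wCost (hw : w none none = 0) (htri : ∀ a b c, w a b ≤ w a c + w c b)
    {X Y : List α} {A : List Pt} (hA : IsPath (0, 0) (X.length, Y.length) A) :
    delCost w X - delCost w Y ≤ wCost w X Y A := by
  have := sub_le_wCost_of_isChain w X Y (delPotential w X Y) hA.1 hA.2.1
    (hA.2.2.imp fun _ _ h => delPotential_sub_le_wStep X Y hw htri h)
  simpa [delPotential] using this

theorem wed_eq_delCost_sub_of_isPath (hw : w none none = 0)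
    (htri : ∀ a b c, w a b ≤ w a c + w c b) {X Y : List α} {A : List Pt}
    (hA : IsPath (0, 0) (X.length, Y.length) A)
    (hcost : wCost w X Y A = delCost w X - delCost w Y) :
    wed w X Y = delCost w X - delCost w Y :=
  IsLeast.csInf_eq ⟨⟨A, hA, hcost⟩, by
    rintro _ ⟨B, hB, rfl⟩
    exact delCost_sub_le_wCost hw htri hB⟩

theorem wed_eq_delCost_sub_of_steps (hw0 : ∀ a, w a a = 0)
    (htri : ∀ a b c, w a b ≤ w a c + w c b) {X Y : List α} (f : ℕ → Pt) (n : ℕ)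
    (h0 : f 0 = (0, 0)) (hn : f n = (X.length, Y.length))
    (hf : ∀ k < n, f (k + 1) = ((f k).1 + 1, (f k).2) ∨
      (f (k + 1) = ((f k).1 + 1, (f k).2 + 1) ∧ X[(f k).1]? = Y[(f k).2]?)) :
    wed w X Y = delCost w X - delCost w Y := by
  set A := (List.range (n + 1)).map f
  have hA : IsPath (f 0) (f n) A := by
    refine ⟨by simp [A, List.range_succ_eq_map], by simp [A, List.range_succ], ?_⟩
    refine (List.isChain_map f).2 ((List.isChain_range_succ _ n).2 fun k hk => ?_)
    rcases hf k hk with h | ⟨h, -⟩ <;> rw [h]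
    exacts [Or.inl rfl, Or.inr (Or.inr rfl)]
  have hcost : wCost w X Y A = delPotential w X Y (f 0) - delPotential w X Y (f n) := by
    refine wCost_eq_sub_of_isChain w X Y _ hA.1 hA.2.1 ?_
    refine (List.isChain_map f).2 ((List.isChain_range_succ _ n).2 fun k hk => ?_)
    rcases hf k hk with h | ⟨h, hmatch⟩ <;> rw [h]
    exacts [wStep_right_eq_delPotential_sub X Y (hw0 none) _,
      wStep_diag_eq_delPotential_sub X Y hw0 _ hmatch]
  rw [h0, hn] at hA hcost
  refine wed_eq_delCost_sub_of_isPath (hw0 none) htri hA ?_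
  simpa [delPotential] using hcost

theorem wed_nil_right (hw0 : ∀ a, w a a = 0) (htri : ∀ a b c, w a b ≤ w a c + w c b)
    (Z : List α) : wed w Z [] = delCost w Z := by
  simpa using wed_eq_delCost_sub_of_steps (Y := []) hw0 htri (fun k => (k, 0)) Z.length rfl rfl
    fun _ _ => Or.inl rfl

theorem wed_frag (hw0 : ∀ a, w a a = 0) (htri : ∀ a b c, w a b ≤ w a c + w c b)
    (X : List α) (i j : ℕ) : wed w X (frag X i j) = delCost w X - delCost w (frag X i j) := by
  -- delete `X[0..i)`, match `X[i..j)` with the fragment, delete the rest of `X`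
  refine wed_eq_delCost_sub_of_steps hw0 htri (fun k => (k, min (k - i) (j - i))) X.length
    (by simp) (by simp [frag]; omega) fun k _ => ?_
  rcases lt_or_ge k i with hki | hik
  · exact Or.inl (Prod.ext rfl (by dsimp only; omega))
  rcases lt_or_ge k j with hkj | hjk
  · refine Or.inr ⟨Prod.ext rfl (by dsimp only; omega), ?_⟩
    dsimp only
    rw [min_eq_left (by omega), frag, List.getElem?_take_of_lt (by omega), List.getElem?_drop,
      Nat.add_sub_cancel' hik]
  · exact Or.inl (Prod.ext rfl (by dsimp only; omega))

end WeightedEditDistance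

section Fragments

variable {α : Type*} (X : List α)

theorem frag_zero_left (i : ℕ) : frag X 0 i = X.take i := by
  simp [frag]

theorem frag_length_right (j : ℕ) : frag X j X.length = X.drop j :=
  List.take_of_length_le (by simp)

theorem take_append_frag_append_drop {i j : ℕ} (hij : i ≤ j) :
    X.take i ++ frag X i j ++ X.drop j = X := by
  obtain ⟨k, rfl⟩ := Nat.exists_eq_add_of_le hij
  rw [frag, Nat.add_sub_cancel_left, List.append_assoc, ← List.drop_drop, List.take_append_drop,
    List.take_append_drop]

end Fragments

theorem wed_to_own_fragment_general {α : Type*} (w : Option α → Option α → ℝ)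
    (hw0 : ∀ a, w a a = 0)
    (htri : ∀ a b c, w a b ≤ w a c + w c b)
    (X : List α) (i j : ℕ) (hij : i ≤ j) :
    wed w X (frag X i j) = wed w (frag X 0 i ++ frag X j X.length) ([] : List α) := by
  rw [wed_frag hw0 htri, wed_nil_right hw0 htri, frag_zero_left, frag_length_right,
    delCost_append]
  nth_rw 1 [← take_append_frag_append_drop X hij]
  simp only [delCost_append]
  ring

/-- Under the triangle inequality, the cheapest way to transform `X`
into its own fragment `X[i..j)` is to delete the prefix `X[0..i)` and the suffix
`X[j..|X|)`: `wed(X, X[i..j)) = wed(X[0..i)·X[j..|X|), ε)`. -/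
theorem wed_to_own_fragment {α : Type*} (w : Option α → Option α → ℝ)
    (hw0 : ∀ a, w a a = 0) (hwnn : ∀ a b, 0 ≤ w a b)
    (htri : ∀ a b c, w a b ≤ w a c + w c b)
    (X : List α) (i j : ℕ) (hij : i ≤ j) (hj : j ≤ X.length) :
    wed w X (frag X i j) = wed w (frag X 0 i ++ frag X j X.length) ([] : List α) :=
  wed_to_own_fragment_general w hw0 htri X i j hij
end

section
/- (Deletion penalty in the gadget) In the setting of the min-plus gadget with weight function w_{A,B} (all insertions and deletions cost F, all substitutions cost between F − pE − pqD and 2F, and F exceeds (|X|+|Y|) times any other cost term), any alignment A : X_ℓ[a..b) → Y that deletes at least one character of X_ℓ[a..b) has cost at least (|Y|+1)·F + R where |R| < F; in particular its cost exceeds the cost of any alignment that deletes no characters and uses no substitution of cost 2F. -/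
/-!
Every edge of an alignment costs at least `F`, except a substitution, which costs at least
`F - c`. A path from `(0, 0)` to `(|X|, |Y|)` with `S` diagonal edges has `|X| + |Y| - S` edges,
and a deletion forces `S ≤ |X| - 1`, so its cost is at least `(|Y| + 1) F - (|X| - 1) c`.
Without deletions there are exactly `|X|` substitutions and `|Y| - |X|` insertions, so if no
substitution costs `2F` the cost is at most `|Y| F + |X| c`, which is smaller because
`F > (|X| + |Y|) c ≥ 2 |X| c`.
-/

theorem AlignStep.le {p q : Pt} (h : AlignStep p q) : p ≤ q := by
  rcases h with rfl | rfl | rfl <;> simp [Prod.le_def]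

theorem sum_map_edges_sub {G : Type*} [AddCommGroup G] (f : Pt → G) :
    ∀ {A : List Pt} {s t : Pt}, A.head? = some s → A.getLast? = some t →
      ((edges A).map fun e => f e.2 - f e.1).sum = f t - f s
  | [], _, _, hs, _ => by simp at hs
  | [a], _, _, hs, ht => by simp_all [edges]
  | a :: b :: l, s, t, hs, ht => by
      simp only [List.head?_cons, Option.some.injEq] at hs
      rw [List.getLast?_cons_cons] at ht
      have ih := sum_map_edges_sub f (A := b :: l) rfl ht
      simp only [edges, List.tail_cons, List.zip_cons_cons, List.map_cons, List.sum_cons] at ih ⊢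
      rw [ih, ← hs]
      abel

/- On alignment steps `dx e * dy e` is `1` for diagonal edges and `0` otherwise. -/
def dx (e : Pt × Pt) : ℝ := (e.2.1 : ℝ) - e.1.1

def dy (e : Pt × Pt) : ℝ := (e.2.2 : ℝ) - e.1.2

namespace IsPath

variable {s t : Pt} {A : List Pt}

theorem alignStep_of_mem_edges (hA : IsPath s t A) :
    ∀ {e : Pt × Pt}, e ∈ edges A → AlignStep e.1 e.2 := by
  obtain ⟨-, -, hchain⟩ := hA
  induction A with
  | nil => simp [edges]
  | cons a l ih =>
    cases l with
    | nil => simp [edges]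
    | cons b l =>
      obtain ⟨hab, hchain⟩ := List.isChain_cons_cons.mp hchain
      intro e he
      simp only [edges, List.tail_cons, List.zip_cons_cons, List.mem_cons] at he
      rcases he with rfl | he
      · exact hab
      · exact ih hchain he

theorem le_of_mem (hA : IsPath s t A) {p : Pt} (hp : p ∈ A) : p ≤ t := by
  obtain ⟨-, ht, hchain⟩ := hA
  have hpair : A.Pairwise (· ≤ ·) := (hchain.imp fun _ _ h => h.le).pairwise
  obtain ⟨l, rfl⟩ := List.getLast?_eq_some_iff.mp ht
  simpa using hpair.rel_getLast hp

theorem snd_le_of_mem_edges (hA : IsPath s t A) {e : Pt × Pt} (he : e ∈ edges A) : e.2 ≤ t :=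
  hA.le_of_mem (List.mem_of_mem_tail (List.of_mem_zip he).2)

theorem sum_map_dx (hA : IsPath s t A) : ((edges A).map dx).sum = t.1 - s.1 :=
  sum_map_edges_sub (fun p => (p.1 : ℝ)) hA.1 hA.2.1

theorem sum_map_dy (hA : IsPath s t A) : ((edges A).map dy).sum = t.2 - s.2 :=
  sum_map_edges_sub (fun p => (p.2 : ℝ)) hA.1 hA.2.1

theorem sum_map_dx_mul_dy_add_one_le {m n : ℕ} (hA : IsPath (0, 0) (m, n) A)
    (hdel : ∃ e ∈ edges A, e.2 = (e.1.1 + 1, e.1.2)) :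
    ((edges A).map fun e => dx e * dy e).sum + 1 ≤ m := by
  have hnonneg : ∀ e ∈ edges A, 0 ≤ dx e * (1 - dy e) := by
    intro e he
    rcases hA.alignStep_of_mem_edges he with h | h | h <;> simp [dx, dy, h]
  obtain ⟨e, he, hd⟩ := hdel
  have hone : 1 ≤ ((edges A).map fun e => dx e * (1 - dy e)).sum := by
    calc (1 : ℝ) = dx e * (1 - dy e) := by simp [dx, dy, hd]
      _ ≤ _ := List.single_le_sum (List.forall_mem_map.mpr hnonneg) _ (List.mem_map_of_mem he)
  have hsplit : ((edges A).map dx).sum =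
      ((edges A).map fun e => dx e * dy e).sum +
        ((edges A).map fun e => dx e * (1 - dy e)).sum := by
    rw [← List.sum_map_add]
    congr 1
    exact List.map_congr_left fun e _ => by ring
  have hm := hA.sum_map_dx
  simp only [Nat.cast_zero, sub_zero] at hm
  linarith

variable {α : Type*} (w : Option α → Option α → ℝ) {X Y : List α}

theorem wStep_of_deletion (hA : IsPath s (X.length, Y.length) A) {e : Pt × Pt}
    (he : e ∈ edges A) (h : e.2 = (e.1.1 + 1, e.1.2)) :
    ∃ a, wStep w X Y e = w (some a) none := by
  have hle := hA.snd_le_of_mem_edges he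
  rw [h, Prod.mk_le_mk] at hle
  exact ⟨X[e.1.1], by simp [wStep, h, List.getElem?_eq_getElem hle.1]⟩

theorem wStep_of_insertion (hA : IsPath s (X.length, Y.length) A) {e : Pt × Pt}
    (he : e ∈ edges A) (h : e.2 = (e.1.1, e.1.2 + 1)) :
    ∃ b, wStep w X Y e = w none (some b) := by
  have hle := hA.snd_le_of_mem_edges he
  rw [h, Prod.mk_le_mk] at hle
  exact ⟨Y[e.1.2], by simp [wStep, h, List.getElem?_eq_getElem hle.2]⟩

theorem wStep_of_diag (hA : IsPath s (X.length, Y.length) A) {e : Pt × Pt}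
    (he : e ∈ edges A) (h : e.2 = (e.1.1 + 1, e.1.2 + 1)) :
    ∃ a b, wStep w X Y e = w (some a) (some b) := by
  have hle := hA.snd_le_of_mem_edges he
  rw [h, Prod.mk_le_mk] at hle
  exact ⟨X[e.1.1], Y[e.1.2], by simp [wStep, h, List.getElem?_eq_getElem hle.1,
    List.getElem?_eq_getElem hle.2]⟩

variable {F c : ℝ}

theorem wCost_ge_of_deletion (hA : IsPath (0, 0) (X.length, Y.length) A)
    (hdel : ∀ a, F ≤ w (some a) none) (hins : ∀ b, F ≤ w none (some b))
    (hsub : ∀ a b, F - c ≤ w (some a) (some b)) (hFc : 0 ≤ F + c)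
    (hdelstep : ∃ e ∈ edges A, e.2 = (e.1.1 + 1, e.1.2)) :
    ((Y.length : ℝ) + 1) * F - ((X.length : ℝ) - 1) * c ≤ wCost w X Y A := by
  have hstep : ∀ e ∈ edges A,
      F * (dx e + dy e) ≤ wStep w X Y e + (F + c) * (dx e * dy e) := by
    intro e he
    rcases hA.alignStep_of_mem_edges he with h | h | h
    · obtain ⟨a, hw⟩ := hA.wStep_of_deletion w he h
      simpa [dx, dy, h, hw] using hdel a
    · obtain ⟨b, hw⟩ := hA.wStep_of_insertion w he h
      simpa [dx, dy, h, hw] using hins b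
    · obtain ⟨a, b, hw⟩ := hA.wStep_of_diag w he h
      simp only [dx, dy, h, hw]
      push_cast
      linarith [hsub a b]
  have hsum := List.sum_le_sum hstep
  rw [List.sum_map_mul_left, List.sum_map_add, List.sum_map_add, List.sum_map_mul_left,
    hA.sum_map_dx, hA.sum_map_dy] at hsum
  have hdiag := mul_le_mul_of_nonneg_left (le_sub_iff_add_le.mpr
    (hA.sum_map_dx_mul_dy_add_one_le hdelstep)) hFc
  simp only [Nat.cast_zero, sub_zero] at hsum
  unfold wCost
  linarith

theorem wCost_le_of_no_deletion (hA : IsPath (0, 0) (X.length, Y.length) A)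
    (hins : ∀ b, w none (some b) ≤ F)
    (hnodel : ∀ e ∈ edges A, e.2 ≠ (e.1.1 + 1, e.1.2))
    (hdiag : ∀ e ∈ edges A, e.2 = (e.1.1 + 1, e.1.2 + 1) → wStep w X Y e ≤ F + c) :
    wCost w X Y A ≤ Y.length * F + X.length * c := by
  have hstep : ∀ e ∈ edges A, wStep w X Y e ≤ F * dy e + c * dx e := by
    intro e he
    rcases hA.alignStep_of_mem_edges he with h | h | h
    · exact absurd h (hnodel e he)
    · obtain ⟨b, hw⟩ := hA.wStep_of_insertion w he h
      simpa [dx, dy, h, hw] using hins b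
    · simpa [dx, dy, h, add_comm] using hdiag e he h
  have hsum := List.sum_le_sum hstep
  rw [List.sum_map_add, List.sum_map_mul_left, List.sum_map_mul_left,
    hA.sum_map_dx, hA.sum_map_dy] at hsum
  simp only [Nat.cast_zero, sub_zero] at hsum
  unfold wCost
  linarith

end IsPath

/-- Deletion penalty in the gadget: if all insertions and deletions cost
`F`, every substitution either costs exactly `2F` or lies within `c` of `F`, and
`F > (|X|+|Y|)·c`, then any alignment of `X` onto `Y` (with `|X| ≤ |Y|`) that deletes at
least one character of `X` has cost at least `(|Y|+1)·F - (|X|+|Y|)·c`; in particular it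
costs strictly more than any alignment that deletes no characters and uses no substitution
of cost `2F`. -/
theorem gadget_deletion_penalty {α : Type*} (w : Option α → Option α → ℝ) (F c : ℝ)
    (hc : 0 ≤ c) (X Y : List α) (hlen : X.length ≤ Y.length)
    (hdel : ∀ a : α, w (some a) none = F)
    (hins : ∀ b : α, w none (some b) = F)
    (hsub : ∀ a b : α, w (some a) (some b) = 2 * F ∨ |w (some a) (some b) - F| ≤ c)
    (hF : ((X.length + Y.length : ℕ) : ℝ) * c < F)
    (A : List Pt) (hA : IsPath (0, 0) (X.length, Y.length) A)
    (hdelstep : ∃ e ∈ edges A, e.2 = (e.1.1 + 1, e.1.2)) :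
    ((Y.length : ℝ) + 1) * F - ((X.length + Y.length : ℕ) : ℝ) * c ≤ wCost w X Y A ∧
    ∀ A' : List Pt, IsPath (0, 0) (X.length, Y.length) A' →
      (∀ e ∈ edges A', e.2 ≠ (e.1.1 + 1, e.1.2)) →
      (∀ e ∈ edges A', e.2 = (e.1.1 + 1, e.1.2 + 1) → wStep w X Y e ≠ 2 * F) →
      wCost w X Y A' < wCost w X Y A := by
  have hF0 : 0 < F := (mul_nonneg (Nat.cast_nonneg _) hc).trans_lt hF
  have hsubF : ∀ a b, F - c ≤ w (some a) (some b) := fun a b => by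
    rcases hsub a b with h | h
    · linarith
    · linarith [(abs_le.mp h).1]
  have hlow := hA.wCost_ge_of_deletion w (fun a => (hdel a).ge) (fun b => (hins b).ge) hsubF
    (by linarith) hdelstep
  have hlenR : (X.length : ℝ) ≤ Y.length := by exact_mod_cast hlen
  push_cast at hF ⊢
  have hYc : 0 ≤ (Y.length : ℝ) * c := mul_nonneg (Nat.cast_nonneg _) hc
  refine ⟨by linarith, fun A' hA' hnodel hno2F => ?_⟩
  have hdiag : ∀ e ∈ edges A', e.2 = (e.1.1 + 1, e.1.2 + 1) → wStep w X Y e ≤ F + c := by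
    intro e he h
    obtain ⟨a, b, hw⟩ := hA'.wStep_of_diag w he h
    rcases hsub a b with h2F | hnear
    · exact absurd (hw.trans h2F) (hno2F e he h)
    · linarith [(abs_le.mp hnear).2]
  have hup := hA'.wCost_le_of_no_deletion w (fun b => (hins b).le) hnodel hdiag
  linarith [mul_nonneg (sub_nonneg.mpr hlenR) hc]
end
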